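/- Fix V, V1, V2 ∈ (Fin n → ZMod 2). Suppose S V1 and S V2 commute with every error, i.e., ⟨u e, V1⟩ = 0 and ⟨u e, V2⟩ = 0 for all e : Fin m, and suppose ⟨C i, V⟩ = p i for all i : Fin K. Then A := S V * T V1 V2 can be used as a decoding observable: for every e : Fin m there exists ε ∈ {1, −1} ⊆ ℝ such that A (E e (W i ψ)) = ε • (E e (W i ψ)) for all i : Fin K. -/

import Mathlib

/-!
The stabilizers fix `ψ`, and every error `E e` and codeword operator `W i` commutes or
anticommutes with every stabilizer `S V'`; hence `E e (W i ψ)` is a joint eigenvector of all the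
`S V'`, with eigenvalue `(-1) ^ ⟨u e + C i, V'⟩`. As `u e` is orthogonal to `V1` and `V2`, the
operator `T V1 V2` acts on it by `(-1) ^ p i = (-1) ^ ⟨C i, V⟩`, which cancels the codeword
part of the eigenvalue of `S V` and leaves `(-1) ^ ⟨u e, V⟩`, independent of `i`.
-/

open Matrix

/-- The character `x ↦ (-1) ^ x` of `ZMod 2`. -/
def zmodTwoSign (x : ZMod 2) : ℝ := if x = 0 then 1 else -1

theorem zmodTwo_eq_zero_or_eq_one (x : ZMod 2) : x = 0 ∨ x = 1 := by
  revert x; decide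

theorem zmodTwoSign_eq_one_or_neg_one (x : ZMod 2) : zmodTwoSign x = 1 ∨ zmodTwoSign x = -1 := by
  unfold zmodTwoSign; split_ifs <;> simp

theorem zmodTwoSign_add (x y : ZMod 2) : zmodTwoSign (x + y) = zmodTwoSign x * zmodTwoSign y := by
  rcases zmodTwo_eq_zero_or_eq_one x with rfl | rfl <;>
  rcases zmodTwo_eq_zero_or_eq_one y with rfl | rfl <;>
  simp only [zmodTwoSign, CharTwo.add_self_eq_zero] <;> norm_num

theorem zmodTwoSign_mul_self (x : ZMod 2) : zmodTwoSign x * zmodTwoSign x = 1 := by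
  rw [← zmodTwoSign_add, CharTwo.add_self_eq_zero, zmodTwoSign, if_pos rfl]

/-- The sign of the Boolean "or" of `a` and `b`. -/
theorem zmodTwoSign_or (a b : ZMod 2) :
    zmodTwoSign (if a = 0 ∧ b = 0 then 0 else 1) =
      (1 / 2 : ℝ) * (-1 + zmodTwoSign a + zmodTwoSign b + zmodTwoSign (a + b)) := by
  rcases zmodTwo_eq_zero_or_eq_one a with rfl | rfl <;>
  rcases zmodTwo_eq_zero_or_eq_one b with rfl | rfl <;>
  simp only [zmodTwoSign, CharTwo.add_self_eq_zero] <;> norm_num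

section TwistedCommutation

variable {R A : Type*} [Monoid R] [Semigroup A] [MulAction R A]

theorem mul_eq_smul_mul_symm {c : R} (hc : c * c = 1) {x y : A} (h : x * y = c • (y * x)) :
    y * x = c • (x * y) := by
  rw [h, smul_smul, hc, one_smul]

theorem mul_mul_eq_smul_mul_mul [IsScalarTower R A A] [SMulCommClass R A A] {a b : R}
    {s x y : A} (hx : s * x = a • (x * s)) (hy : s * y = b • (y * s)) :
    s * (x * y) = (a * b) • (x * y * s) := by
  rw [← mul_assoc, hx, smul_mul_assoc, mul_assoc, hy, mul_smul_comm, smul_smul, mul_assoc]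

end TwistedCommutation

theorem Module.End.apply_apply_of_mul_eq_smul_mul {R M S : Type*} [CommSemiring R]
    [AddCommMonoid M] [Module R M] [Monoid S] [DistribMulAction S M] [SMulCommClass R S M]
    {s x : Module.End R M} {c : S} (h : s * x = c • (x * s)) {v : M} (hv : s v = v) :
    s (x v) = c • x v := by
  simpa [hv] using LinearMap.congr_fun h v

section ComplexOperators

variable {H : Type*} [AddCommGroup H] [Module ℂ H]

theorem apply_apply_apply_eq_zmodTwoSign_smul {s x y : Module.End ℂ H} {α β : ZMod 2}
    (hx : x * s = zmodTwoSign α • (s * x)) (hy : y * s = zmodTwoSign β • (s * y)) {ψ : H}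
    (hψ : s ψ = ψ) : s (x (y ψ)) = zmodTwoSign (α + β) • x (y ψ) := by
  rw [zmodTwoSign_add]
  exact Module.End.apply_apply_of_mul_eq_smul_mul (mul_mul_eq_smul_mul_mul
    (mul_eq_smul_mul_symm (zmodTwoSign_mul_self α) hx)
    (mul_eq_smul_mul_symm (zmodTwoSign_mul_self β) hy)) hψ

theorem half_smul_sum_apply_eq_zmodTwoSign_or {P Q R : Module.End ℂ H} {φ : H} {a b : ZMod 2}
    (hP : P φ = zmodTwoSign a • φ) (hQ : Q φ = zmodTwoSign b • φ)
    (hR : R φ = zmodTwoSign (a + b) • φ) :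
    ((1 / 2 : ℝ) • (-1 + P + Q + R)) φ = zmodTwoSign (if a = 0 ∧ b = 0 then 0 else 1) • φ := by
  rw [zmodTwoSign_or]
  simp only [LinearMap.smul_apply, LinearMap.add_apply, LinearMap.neg_apply,
    Module.End.one_apply, hP, hQ, hR]
  module

end ComplexOperators

theorem stmt_13_general {n K m : ℕ}
    {H : Type*} [AddCommGroup H] [Module ℂ H]
    (S : (Fin n → ZMod 2) → Module.End ℂ H)
    (ψ : H) (hψ : ∀ V : Fin n → ZMod 2, S V ψ = ψ)
    (C : Fin K → (Fin n → ZMod 2))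
    (W : Fin K → Module.End ℂ H)
    (hW : ∀ (i : Fin K) (V : Fin n → ZMod 2),
      W i * S V = (if (∑ k, C i k * V k) = 0 then (1 : ℝ) else -1) • (S V * W i))
    (E : Fin m → Module.End ℂ H)
    (u : Fin m → (Fin n → ZMod 2))
    (hE : ∀ (e : Fin m) (V : Fin n → ZMod 2),
      E e * S V = (if (∑ k, u e k * V k) = 0 then (1 : ℝ) else -1) • (S V * E e))
    (V V1 V2 : Fin n → ZMod 2)
    (p : Fin K → ZMod 2)
    (hp : ∀ i : Fin K,
      p i = if (∑ k, C i k * V1 k) = 0 ∧ (∑ k, C i k * V2 k) = 0 then 0 else 1)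
    (hu1 : ∀ e : Fin m, (∑ k, u e k * V1 k) = 0)
    (hu2 : ∀ e : Fin m, (∑ k, u e k * V2 k) = 0)
    (hCV : ∀ i : Fin K, (∑ k, C i k * V k) = p i)
    (A : Module.End ℂ H)
    (hA : A = S V * ((1 / 2 : ℝ) • (-1 + S V1 + S V2 + S (V1 + V2)))) :
    ∀ e : Fin m, ∃ ε : ℝ, (ε = 1 ∨ ε = -1) ∧
      ∀ i : Fin K, A (E e (W i ψ)) = ε • (E e (W i ψ)) := by
  intro e
  refine ⟨zmodTwoSign (u e ⬝ᵥ V), zmodTwoSign_eq_one_or_neg_one _, fun i => ?_⟩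
  have hφ (V' : Fin n → ZMod 2) : S V' (E e (W i ψ)) =
      zmodTwoSign (u e ⬝ᵥ V' + C i ⬝ᵥ V') • E e (W i ψ) :=
    apply_apply_apply_eq_zmodTwoSign_smul (hE e V') (hW i V') (hψ V')
  have hu1e : u e ⬝ᵥ V1 = 0 := hu1 e
  have hu2e : u e ⬝ᵥ V2 = 0 := hu2 e
  have hpi : p i = if C i ⬝ᵥ V1 = 0 ∧ C i ⬝ᵥ V2 = 0 then 0 else 1 := hp i
  have hCVi : C i ⬝ᵥ V = p i := hCV i
  have hT : ((1 / 2 : ℝ) • (-1 + S V1 + S V2 + S (V1 + V2))) (E e (W i ψ)) =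
      zmodTwoSign (p i) • E e (W i ψ) := by
    rw [hpi]
    refine half_smul_sum_apply_eq_zmodTwoSign_or ?_ ?_ ?_
    · simpa only [hu1e, zero_add] using hφ V1
    · simpa only [hu2e, zero_add] using hφ V2
    · simpa only [dotProduct_add, hu1e, hu2e, zero_add] using hφ (V1 + V2)
  rw [hA, Module.End.mul_apply, hT, LinearMap.map_smul_of_tower, hφ V, hCVi, smul_smul,
    zmodTwoSign_add, mul_left_comm, zmodTwoSign_mul_self, mul_one]

theorem stmt_13 {n K m : ℕ} (hn : 1 ≤ n) (hK : 1 ≤ K) (hm : 1 ≤ m)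
    {H : Type*} [AddCommGroup H] [Module ℂ H]
    (S : (Fin n → ZMod 2) → Module.End ℂ H)
    (hS0 : S 0 = 1)
    (hSmul : ∀ U V : Fin n → ZMod 2, S (U + V) = S U * S V)
    (ψ : H) (hψ : ∀ V : Fin n → ZMod 2, S V ψ = ψ)
    (C : Fin K → (Fin n → ZMod 2))
    (W : Fin K → Module.End ℂ H)
    (hW : ∀ (i : Fin K) (V : Fin n → ZMod 2),
      W i * S V = (if (∑ k, C i k * V k) = 0 then (1 : ℝ) else -1) • (S V * W i))
    (E : Fin m → Module.End ℂ H)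
    (u : Fin m → (Fin n → ZMod 2))
    (hE : ∀ (e : Fin m) (V : Fin n → ZMod 2),
      E e * S V = (if (∑ k, u e k * V k) = 0 then (1 : ℝ) else -1) • (S V * E e))
    (V V1 V2 : Fin n → ZMod 2)
    (p : Fin K → ZMod 2)
    (hp : ∀ i : Fin K,
      p i = if (∑ k, C i k * V1 k) = 0 ∧ (∑ k, C i k * V2 k) = 0 then 0 else 1)
    (hu1 : ∀ e : Fin m, (∑ k, u e k * V1 k) = 0)
    (hu2 : ∀ e : Fin m, (∑ k, u e k * V2 k) = 0)
    (hCV : ∀ i : Fin K, (∑ k, C i k * V k) = p i)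
    (A : Module.End ℂ H)
    (hA : A = S V * ((1 / 2 : ℝ) • (-1 + S V1 + S V2 + S (V1 + V2)))) :
    ∀ e : Fin m, ∃ ε : ℝ, (ε = 1 ∨ ε = -1) ∧
      ∀ i : Fin K, A (E e (W i ψ)) = ε • (E e (W i ψ)) :=
  stmt_13_general S ψ hψ C W hW E u hE V V1 V2 p hp hu1 hu2 hCV A hA
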